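/- General bound theorem: with the setup of the general formalism, suppose {1,…,m} = A ⊔ B is a partition of the parties into two nonempty sets such that 𝒢_Φ(B) ⊆ 𝒢_Φ(A). Then −log₂( |𝒢_Φ(A)|·|𝒢_Φ(B)| / |𝒢_Φ| ) ≤ E_G(Ψ) − n·log₂|G| ≤ −log₂|𝒢_Φ|. -/

import Mathlib

open scoped BigOperators
open scoped Classical

noncomputable section

namespace GenForm

variable {G : Type} [Group G] [Fintype G] {n m : ℕ}
  {ι : Fin m → Type} [∀ k, Fintype (ι k)] [∀ k, DecidableEq (ι k)]

/-- `O` assigns to every party `k` a unitary representation of 𝒢 = G^{×n} on the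
(concretely modelled) finite-dimensional Hilbert space H_k = (ι k → ℂ). -/
def IsLocalRep (O : (k : Fin m) → (Fin n → G) → Matrix (ι k) (ι k) ℂ) : Prop :=
  ∀ k : Fin m,
    (∀ t, O k t ∈ Matrix.unitaryGroup (ι k) ℂ) ∧
    O k 1 = 1 ∧
    ∀ t u, O k (t * u) = O k t * O k u

/-- The product vector Φ = φ₁ ⊗ ⋯ ⊗ φ_m, as an amplitude function. -/
def prodVec (φ : (k : Fin m) → ι k → ℂ) : ((k : Fin m) → ι k) → ℂ :=
  fun x => ∏ k, φ k (x k)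

/-- The vector O^t Φ = ⊗_k O_k^t φ_k. -/
def actVec (O : (k : Fin m) → (Fin n → G) → Matrix (ι k) (ι k) ℂ)
    (φ : (k : Fin m) → ι k → ℂ) (t : Fin n → G) : ((k : Fin m) → ι k) → ℂ :=
  fun x => ∏ k, ((O k t).mulVec (φ k)) (x k)

/-- The vector O_X^t Φ, where the truncated operator acts as O_k^t for k ∈ X and as
the identity elsewhere. -/
def actVecOn (O : (k : Fin m) → (Fin n → G) → Matrix (ι k) (ι k) ℂ)
    (φ : (k : Fin m) → ι k → ℂ) (X : Finset (Fin m)) (t : Fin n → G) :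
    ((k : Fin m) → ι k) → ℂ :=
  fun x => ∏ k, if k ∈ X then ((O k t).mulVec (φ k)) (x k) else φ k (x k)

/-- Each local vector O_k^t φ_k and O_k^u φ_k is either equal or orthogonal. -/
def OrthCond (O : (k : Fin m) → (Fin n → G) → Matrix (ι k) (ι k) ℂ)
    (φ : (k : Fin m) → ι k → ℂ) : Prop :=
  ∀ (k : Fin m) (t u : Fin n → G),
    (O k t).mulVec (φ k) = (O k u).mulVec (φ k) ∨
    ∑ x : ι k, (starRingEnd ℂ) (((O k t).mulVec (φ k)) x) * ((O k u).mulVec (φ k)) x = 0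

/-- The global stabiliser 𝒢_Φ = { t : O^t Φ = Φ }. -/
def globalStab (O : (k : Fin m) → (Fin n → G) → Matrix (ι k) (ι k) ℂ)
    (φ : (k : Fin m) → ι k → ℂ) : Set (Fin n → G) :=
  { t | actVec O φ t = prodVec φ }

/-- The local stabiliser 𝒢_Φ(X) = { t : O_X^t Φ = Φ }. -/
def localStab (O : (k : Fin m) → (Fin n → G) → Matrix (ι k) (ι k) ℂ)
    (φ : (k : Fin m) → ι k → ℂ) (X : Finset (Fin m)) : Set (Fin n → G) :=
  { t | actVecOn O φ X t = prodVec φ }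

/-- The symmetrized state Ψ = (|𝒢|·|𝒢_Φ|)^{-1/2} ∑_{t∈𝒢} O^t Φ. -/
def Psi (O : (k : Fin m) → (Fin n → G) → Matrix (ι k) (ι k) ℂ)
    (φ : (k : Fin m) → ι k → ℂ) : ((k : Fin m) → ι k) → ℂ :=
  fun x => (((Real.sqrt ((Fintype.card G) ^ n * Nat.card (globalStab O φ)))⁻¹ : ℝ) : ℂ) *
    ∑ t : Fin n → G, actVec O φ t x

/-- A product state of the m parties. -/
def IsProd (Φ : ((k : Fin m) → ι k) → ℂ) : Prop :=
  ∃ χ : (k : Fin m) → ι k → ℂ,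
    (∀ k, ∑ x : ι k, ‖χ k x‖ ^ 2 = 1) ∧
    ∀ x, Φ x = ∏ k, χ k (x k)

/-- Maximal overlap with product states of the parties. -/
def LMax (ψ : ((k : Fin m) → ι k) → ℂ) : ℝ :=
  sSup { r : ℝ | ∃ Φ, IsProd Φ ∧
    r = ‖∑ x : (k : Fin m) → ι k, (starRingEnd ℂ) (Φ x) * ψ x‖ }

/-- Geometric entanglement. -/
def EG (ψ : ((k : Fin m) → ι k) → ℂ) : ℝ :=
  - Real.logb 2 (LMax ψ ^ 2)

end GenForm

/-!
The overlap of `Ψ` with a product state `χ` is `(|𝒢| |𝒢_Φ|)^{-1/2} ∑ₜ ⟨χ, O^t Φ⟩`. For `χ = Φ`,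
the orthogonality condition makes `⟨Φ, O^t Φ⟩` the indicator of `𝒢_Φ`, so
`Λ_max(Ψ)² ≥ |𝒢_Φ| / |𝒢|`. For arbitrary `χ`, each term factors as
`⟨χ_A ⊗ Φ_B, O_A^t Φ⟩ ⟨Φ_A ⊗ χ_B, O_B^t Φ⟩`, and Cauchy–Schwarz in `t` reduces the overlap to sums
`∑ₜ |⟨χ', O_X^t Φ⟩|²`. The vectors `O_X^t Φ` form the orbit of `Φ` under the truncated action;
they are orthonormal, and by orbit–stabiliser each occurs `|𝒢_Φ(X)|` times, so Bessel's inequality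
bounds that sum by `|𝒢_Φ(X)|`. Hence `Λ_max(Ψ)² ≤ |𝒢_Φ(A)| |𝒢_Φ(B)| / (|𝒢| |𝒢_Φ|)`.
-/

open Finset MulAction WithLp Matrix
open scoped InnerProductSpace

theorem norm_sum_mul_sq_le {ι R : Type*} [NonUnitalSeminormedRing R] (s : Finset ι)
    (a b : ι → R) :
    ‖∑ i ∈ s, a i * b i‖ ^ 2 ≤ (∑ i ∈ s, ‖a i‖ ^ 2) * ∑ i ∈ s, ‖b i‖ ^ 2 := by
  calc ‖∑ i ∈ s, a i * b i‖ ^ 2 ≤ (∑ i ∈ s, ‖a i‖ * ‖b i‖) ^ 2 := by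
        gcongr
        exact (norm_sum_le _ _).trans (sum_le_sum fun i _ => norm_mul_le _ _)
    _ ≤ _ := sum_mul_sq_le_sq_mul_sq _ _ _

theorem sum_norm_inner_smul_sq_le {𝕜 T V E : Type*} [RCLike 𝕜] [Group T] [Fintype T]
    [MulAction T V] [NormedAddCommGroup E] [InnerProductSpace 𝕜 E] (e : V → E) (v : V)
    (hnorm : ∀ t : T, ‖e (t • v)‖ = 1)
    (horth : ∀ t u : T, t • v ≠ u • v → ⟪e (t • v), e (u • v)⟫_𝕜 = 0) (x : E) :
    ∑ t : T, ‖⟪e (t • v), x⟫_𝕜‖ ^ 2 ≤ Nat.card (stabilizer T v) * ‖x‖ ^ 2 := by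
  classical
  have : Fintype (orbit T v) := (Set.finite_range fun t : T => t • v).fintype
  have : Fintype (stabilizer T v) := Fintype.ofFinite _
  have horthonormal : Orthonormal 𝕜 fun y : orbit T v => e y :=
    ⟨fun ⟨_, t, rfl⟩ => hnorm t,
      fun ⟨_, t, rfl⟩ ⟨_, u, rfl⟩ h => horth t u fun htu => h (Subtype.ext htu)⟩
  calc ∑ t : T, ‖⟪e (t • v), x⟫_𝕜‖ ^ 2
      = ∑ p : orbit T v × stabilizer T v, ‖⟪e p.1, x⟫_𝕜‖ ^ 2 :=
        Fintype.sum_equiv (orbitProdStabilizerEquivGroup T v).symm _ _ fun _ => rfl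
    _ = Nat.card (stabilizer T v) * ∑ y : orbit T v, ‖⟪e y, x⟫_𝕜‖ ^ 2 := by
        rw [Fintype.sum_prod_type, Finset.mul_sum]
        simp [Nat.card_eq_fintype_card]
    _ ≤ _ := by
        gcongr
        exact horthonormal.sum_inner_products_le x

theorem inner_toLp_eq_sum {κ : Type*} [Fintype κ] (f g : κ → ℂ) :
    ⟪toLp 2 f, toLp 2 g⟫_ℂ = ∑ x, starRingEnd ℂ (f x) * g x := by
  simp [EuclideanSpace.inner_toLp_toLp, dotProduct, mul_comm]

theorem norm_toLp_eq_one {κ : Type*} [Fintype κ] {f : κ → ℂ} (hf : ∑ x, ‖f x‖ ^ 2 = 1) :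
    ‖toLp 2 f‖ = 1 := by
  simp [EuclideanSpace.norm_eq, hf]

theorem inner_toLp_mulVec_mulVec {κ : Type*} [Fintype κ] [DecidableEq κ] {U : Matrix κ κ ℂ}
    (hU : U ∈ unitaryGroup κ ℂ) (f g : κ → ℂ) :
    ⟪toLp 2 (U *ᵥ f), toLp 2 (U *ᵥ g)⟫_ℂ = ⟪toLp 2 f, toLp 2 g⟫_ℂ := by
  simp only [EuclideanSpace.inner_toLp_toLp]
  rw [dotProduct_comm, star_mulVec, ← dotProduct_mulVec, mulVec_mulVec,
    ← star_eq_conjTranspose, (mem_unitaryGroup_iff').1 hU, one_mulVec, dotProduct_comm]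

theorem norm_toLp_mulVec {κ : Type*} [Fintype κ] [DecidableEq κ] {U : Matrix κ κ ℂ}
    (hU : U ∈ unitaryGroup κ ℂ) (f : κ → ℂ) : ‖toLp 2 (U *ᵥ f)‖ = ‖toLp 2 f‖ := by
  rw [norm_eq_sqrt_re_inner (𝕜 := ℂ), norm_eq_sqrt_re_inner (𝕜 := ℂ),
    inner_toLp_mulVec_mulVec hU]

namespace GenForm

section ProductVectors

variable {m : ℕ} {ι : Fin m → Type} [∀ k, Fintype (ι k)] {f g : (k : Fin m) → ι k → ℂ}

theorem inner_toLp_prodVec (f g : (k : Fin m) → ι k → ℂ) :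
    ⟪toLp 2 (prodVec f), toLp 2 (prodVec g)⟫_ℂ = ∏ k, ⟪toLp 2 (f k), toLp 2 (g k)⟫_ℂ := by
  simp only [inner_toLp_eq_sum, prodVec, Fintype.prod_sum, map_prod, prod_mul_distrib]

theorem norm_toLp_prodVec (f : (k : Fin m) → ι k → ℂ) :
    ‖toLp 2 (prodVec f)‖ = ∏ k, ‖toLp 2 (f k)‖ := by
  have h : ‖toLp 2 (prodVec f)‖ ^ 2 = (∏ k, ‖toLp 2 (f k)‖) ^ 2 := by
    have h := inner_toLp_prodVec f f
    simp only [inner_self_eq_norm_sq_to_K] at h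
    rw [← prod_pow]
    exact_mod_cast h
  exact (pow_left_inj₀ (norm_nonneg _) (prod_nonneg fun _ _ => norm_nonneg _) two_ne_zero).1 h

theorem norm_toLp_prodVec_eq_one (hf : ∀ k, ‖toLp 2 (f k)‖ = 1) : ‖toLp 2 (prodVec f)‖ = 1 := by
  rw [norm_toLp_prodVec, prod_eq_one fun k _ => hf k]

theorem inner_toLp_prodVec_eq_zero_of_ne
    (h : ∀ k, f k = g k ∨ ⟪toLp 2 (f k), toLp 2 (g k)⟫_ℂ = 0) (hne : f ≠ g) :
    ⟪toLp 2 (prodVec f), toLp 2 (prodVec g)⟫_ℂ = 0 := by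
  obtain ⟨k, hk⟩ := Function.ne_iff.1 hne
  rw [inner_toLp_prodVec]
  exact prod_eq_zero (mem_univ k) ((h k).resolve_left hk)

theorem inner_toLp_prodVec_eq_ite (hf : ∀ k, ‖toLp 2 (f k)‖ = 1)
    (h : ∀ k, f k = g k ∨ ⟪toLp 2 (f k), toLp 2 (g k)⟫_ℂ = 0) :
    ⟪toLp 2 (prodVec f), toLp 2 (prodVec g)⟫_ℂ = if f = g then 1 else 0 := by
  split_ifs with hfg
  · rw [hfg, inner_self_eq_norm_sq_to_K, norm_toLp_prodVec_eq_one (hfg ▸ hf)]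
    norm_num
  · exact inner_toLp_prodVec_eq_zero_of_ne h hfg

theorem eq_of_prodVec_eq (hf : ∀ k, ‖toLp 2 (f k)‖ = 1)
    (h : ∀ k, f k = g k ∨ ⟪toLp 2 (f k), toLp 2 (g k)⟫_ℂ = 0) (hfg : prodVec f = prodVec g) :
    f = g := by
  by_contra hne
  have h0 := inner_toLp_prodVec_eq_zero_of_ne h hne
  rw [← hfg, inner_self_eq_norm_sq_to_K, norm_toLp_prodVec_eq_one hf] at h0
  norm_num at h0

theorem inner_toLp_prodVec_piecewise (X : Finset (Fin m)) {φ : (k : Fin m) → ι k → ℂ}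
    (hφ : ∀ k, ‖toLp 2 (φ k)‖ = 1) :
    ⟪toLp 2 (prodVec (X.piecewise f φ)), toLp 2 (prodVec (X.piecewise g φ))⟫_ℂ =
      ∏ k ∈ X, ⟪toLp 2 (f k), toLp 2 (g k)⟫_ℂ := by
  rw [inner_toLp_prodVec, ← prod_mul_prod_compl X, prod_eq_one (s := Xᶜ) fun k hk => ?_, mul_one]
  · exact prod_congr rfl fun k hk => by simp [hk]
  · simp [mem_compl.1 hk, inner_self_eq_norm_sq_to_K, hφ k]

end ProductVectors

/-- The local factors of `O_X^t (⊗ₖ f k)`. -/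
def localTuple {G : Type} {n m : ℕ} {ι : Fin m → Type} [∀ k, Fintype (ι k)]
    (O : (k : Fin m) → (Fin n → G) → Matrix (ι k) (ι k) ℂ) (X : Finset (Fin m))
    (t : Fin n → G) (f : (k : Fin m) → ι k → ℂ) : (k : Fin m) → ι k → ℂ :=
  X.piecewise (fun k => O k t *ᵥ f k) f

section LocalTuples

variable {G : Type} {n m : ℕ} {ι : Fin m → Type} [∀ k, Fintype (ι k)]
  {O : (k : Fin m) → (Fin n → G) → Matrix (ι k) (ι k) ℂ} {φ : (k : Fin m) → ι k → ℂ}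

theorem actVec_eq_prodVec (t : Fin n → G) :
    actVec O φ t = prodVec fun k => O k t *ᵥ φ k := rfl

theorem actVecOn_eq_prodVec_localTuple (X : Finset (Fin m)) (t : Fin n → G) :
    actVecOn O φ X t = prodVec (localTuple O X t φ) := by
  funext x
  simp only [actVecOn, prodVec, localTuple, Finset.piecewise]
  exact prod_congr rfl fun k _ => by split_ifs <;> rfl

theorem actVec_eq_prodVec_localTuple (t : Fin n → G) :
    actVec O φ t = prodVec (localTuple O univ t φ) := by
  rw [localTuple, piecewise_univ]
  rfl

theorem globalStab_eq_localStab_univ : globalStab O φ = localStab O φ univ := by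
  ext t
  simp only [globalStab, localStab, Set.mem_ofPred_eq, actVec_eq_prodVec_localTuple,
    actVecOn_eq_prodVec_localTuple]

theorem OrthCond.localTuple_eq_or_inner_eq_zero (horth : OrthCond O φ) (X : Finset (Fin m))
    (t u : Fin n → G) (k : Fin m) :
    localTuple O X t φ k = localTuple O X u φ k ∨
      ⟪toLp 2 (localTuple O X t φ k), toLp 2 (localTuple O X u φ k)⟫_ℂ = 0 := by
  by_cases hk : k ∈ X
  · simp only [localTuple, piecewise_eq_of_mem _ _ _ hk, inner_toLp_eq_sum]
    exact horth k t u
  · simp [localTuple, hk]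

end LocalTuples

section Representation

variable {G : Type} [Group G] {n m : ℕ} {ι : Fin m → Type} [∀ k, Fintype (ι k)]
  [∀ k, DecidableEq (ι k)] {O : (k : Fin m) → (Fin n → G) → Matrix (ι k) (ι k) ℂ}
  {φ : (k : Fin m) → ι k → ℂ}

theorem IsLocalRep.localTuple_one (hO : IsLocalRep O) (X : Finset (Fin m))
    (f : (k : Fin m) → ι k → ℂ) : localTuple O X 1 f = f := by
  ext k : 1
  by_cases hk : k ∈ X <;> simp [localTuple, hk, (hO k).2.1]

theorem IsLocalRep.localTuple_mul (hO : IsLocalRep O) (X : Finset (Fin m)) (t u : Fin n → G)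
    (f : (k : Fin m) → ι k → ℂ) :
    localTuple O X (t * u) f = localTuple O X t (localTuple O X u f) := by
  ext k : 1
  by_cases hk : k ∈ X <;> simp [localTuple, hk, (hO k).2.2, mulVec_mulVec]

abbrev IsLocalRep.localAction (hO : IsLocalRep O) (X : Finset (Fin m)) :
    MulAction (Fin n → G) ((k : Fin m) → ι k → ℂ) where
  smul := localTuple O X
  one_smul := hO.localTuple_one X
  mul_smul := hO.localTuple_mul X

theorem IsLocalRep.norm_toLp_localTuple (hO : IsLocalRep O) (hφ : ∀ k, ‖toLp 2 (φ k)‖ = 1)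
    (X : Finset (Fin m)) (t : Fin n → G) (k : Fin m) :
    ‖toLp 2 (localTuple O X t φ k)‖ = 1 := by
  by_cases hk : k ∈ X
  · simp only [localTuple, piecewise_eq_of_mem _ _ _ hk, norm_toLp_mulVec ((hO k).1 t), hφ k]
  · simp [localTuple, hk, hφ k]

theorem localStab_eq (hO : IsLocalRep O) (hφ : ∀ k, ‖toLp 2 (φ k)‖ = 1)
    (horth : OrthCond O φ) (X : Finset (Fin m)) :
    localStab O φ X = {t | localTuple O X t φ = φ} := by
  ext t
  simp only [localStab, Set.mem_ofPred_eq, actVecOn_eq_prodVec_localTuple]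
  refine ⟨fun h => ?_, fun h => by rw [h]⟩
  refine eq_of_prodVec_eq (hO.norm_toLp_localTuple hφ X t) (fun k => ?_) h
  simpa only [hO.localTuple_one] using horth.localTuple_eq_or_inner_eq_zero X t 1 k

theorem sum_norm_inner_actVecOn_sq_le [Fintype G] (hO : IsLocalRep O)
    (hφ : ∀ k, ‖toLp 2 (φ k)‖ = 1) (horth : OrthCond O φ) (X : Finset (Fin m))
    (x : EuclideanSpace ℂ ((k : Fin m) → ι k)) :
    ∑ t : Fin n → G, ‖⟪toLp 2 (actVecOn O φ X t), x⟫_ℂ‖ ^ 2 ≤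
      Nat.card (localStab O φ X) * ‖x‖ ^ 2 := by
  let _ := hO.localAction X
  have hstab : Nat.card (stabilizer (Fin n → G) φ) = Nat.card (localStab O φ X) := by
    rw [localStab_eq hO hφ horth]
    rfl
  simp only [actVecOn_eq_prodVec_localTuple, ← hstab]
  exact sum_norm_inner_smul_sq_le (fun f => toLp 2 (prodVec f)) φ
    (fun t => norm_toLp_prodVec_eq_one (hO.norm_toLp_localTuple hφ X t))
    (fun t u => inner_toLp_prodVec_eq_zero_of_ne (horth.localTuple_eq_or_inner_eq_zero X t u)) x

end Representation

section Overlaps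

variable {m : ℕ} {ι : Fin m → Type} [∀ k, Fintype (ι k)]

theorem le_LMax (ψ : ((k : Fin m) → ι k) → ℂ) (χ : (k : Fin m) → ι k → ℂ)
    (hχ : ∀ k, ∑ x, ‖χ k x‖ ^ 2 = 1) :
    ‖⟪toLp 2 (prodVec χ), toLp 2 ψ⟫_ℂ‖ ≤ LMax ψ := by
  refine le_csSup ⟨‖toLp 2 ψ‖, ?_⟩ ⟨prodVec χ, ⟨χ, hχ, fun _ => rfl⟩, by rw [inner_toLp_eq_sum]⟩
  rintro r ⟨Φ, ⟨χ', hχ', hΦ⟩, rfl⟩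
  rw [funext hΦ, ← inner_toLp_eq_sum]
  calc ‖⟪toLp 2 (prodVec χ'), toLp 2 ψ⟫_ℂ‖ ≤ ‖toLp 2 (prodVec χ')‖ * ‖toLp 2 ψ‖ :=
        norm_inner_le_norm _ _
    _ = ‖toLp 2 ψ‖ := by
        rw [norm_toLp_prodVec_eq_one fun k => norm_toLp_eq_one (hχ' k), one_mul]

theorem LMax_le {ψ : ((k : Fin m) → ι k) → ℂ} {M : ℝ} (hM : 0 ≤ M)
    (h : ∀ χ : (k : Fin m) → ι k → ℂ, (∀ k, ∑ x, ‖χ k x‖ ^ 2 = 1) →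
      ‖⟪toLp 2 (prodVec χ), toLp 2 ψ⟫_ℂ‖ ≤ M) :
    LMax ψ ≤ M := by
  refine Real.sSup_le ?_ hM
  rintro r ⟨Φ, ⟨χ, hχ, hΦ⟩, rfl⟩
  rw [funext hΦ, ← inner_toLp_eq_sum]
  exact h χ hχ

end Overlaps

section Symmetrisation

variable {G : Type} [Fintype G] {n m : ℕ} {ι : Fin m → Type}
  [∀ k, Fintype (ι k)] {O : (k : Fin m) → (Fin n → G) → Matrix (ι k) (ι k) ℂ}
  {φ : (k : Fin m) → ι k → ℂ}

theorem norm_inner_toLp_Psi_sq (Φ : ((k : Fin m) → ι k) → ℂ) :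
    ‖⟪toLp 2 Φ, toLp 2 (Psi O φ)⟫_ℂ‖ ^ 2 =
      ‖∑ t, ⟪toLp 2 Φ, toLp 2 (actVec O φ t)⟫_ℂ‖ ^ 2 /
        ((Fintype.card G : ℝ) ^ n * Nat.card (globalStab O φ)) := by
  have hPsi : Psi O φ = (((√((Fintype.card G : ℝ) ^ n * Nat.card (globalStab O φ)))⁻¹ : ℝ) : ℂ) •
      ∑ t, actVec O φ t := by
    funext x
    simp [Psi, Finset.sum_apply]
  rw [hPsi, toLp_smul, toLp_sum, inner_smul_right, inner_sum, norm_mul, mul_pow,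
    Complex.norm_real, Real.norm_eq_abs, sq_abs, inv_pow, Real.sq_sqrt (by positivity),
    inv_mul_eq_div]

variable [Group G] [∀ k, DecidableEq (ι k)]

theorem card_globalStab_pos (hO : IsLocalRep O) : 0 < Nat.card (globalStab O φ) := by
  have h1 : (1 : Fin n → G) ∈ globalStab O φ := by
    rw [globalStab_eq_localStab_univ]
    show actVecOn O φ univ 1 = prodVec φ
    rw [actVecOn_eq_prodVec_localTuple, hO.localTuple_one]
  have : Nonempty (globalStab O φ) := ⟨⟨1, h1⟩⟩
  exact Nat.card_pos

theorem sum_inner_prodVec_actVec (hO : IsLocalRep O) (hφ : ∀ k, ‖toLp 2 (φ k)‖ = 1)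
    (horth : OrthCond O φ) :
    ∑ t, ⟪toLp 2 (prodVec φ), toLp 2 (actVec O φ t)⟫_ℂ = Nat.card (globalStab O φ) := by
  have hterm : ∀ t, ⟪toLp 2 (prodVec φ), toLp 2 (actVec O φ t)⟫_ℂ =
      if φ = localTuple O univ t φ then 1 else 0 := by
    intro t
    have h := inner_toLp_prodVec_eq_ite (hO.norm_toLp_localTuple hφ univ 1)
      (horth.localTuple_eq_or_inner_eq_zero univ 1 t)
    rwa [hO.localTuple_one, ← actVec_eq_prodVec_localTuple] at h
  rw [sum_congr rfl fun t _ => hterm t, sum_boole, globalStab_eq_localStab_univ,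
    localStab_eq hO hφ horth, Nat.card_eq_fintype_card, Fintype.card_subtype]
  simp only [eq_comm, Set.mem_ofPred_eq]

theorem norm_sum_inner_prodVec_actVec_sq_le (hO : IsLocalRep O) (hφ : ∀ k, ‖toLp 2 (φ k)‖ = 1)
    (horth : OrthCond O φ) (A : Finset (Fin m)) {χ : (k : Fin m) → ι k → ℂ}
    (hχ : ∀ k, ‖toLp 2 (χ k)‖ = 1) :
    ‖∑ t, ⟪toLp 2 (prodVec χ), toLp 2 (actVec O φ t)⟫_ℂ‖ ^ 2 ≤
      Nat.card (localStab O φ A) * Nat.card (localStab O φ Aᶜ) := by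
  set overlap : Finset (Fin m) → (Fin n → G) → ℂ :=
    fun X t => ⟪toLp 2 (prodVec (X.piecewise χ φ)), toLp 2 (actVecOn O φ X t)⟫_ℂ
  have hsplit : ∀ t, ⟪toLp 2 (prodVec χ), toLp 2 (actVec O φ t)⟫_ℂ =
      overlap A t * overlap Aᶜ t := by
    intro t
    simp only [overlap, actVec_eq_prodVec, actVecOn_eq_prodVec_localTuple, localTuple,
      inner_toLp_prodVec_piecewise _ hφ, inner_toLp_prodVec, prod_mul_prod_compl]
  have hbessel : ∀ X, ∑ t, ‖overlap X t‖ ^ 2 ≤ Nat.card (localStab O φ X) := by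
    intro X
    have h := sum_norm_inner_actVecOn_sq_le hO hφ horth X (toLp 2 (prodVec (X.piecewise χ φ)))
    rw [norm_toLp_prodVec_eq_one fun k => by by_cases hk : k ∈ X <;> simp [hk, hχ k, hφ k],
      one_pow, mul_one] at h
    convert h using 3 with t
    exact norm_inner_symm _ _
  calc ‖∑ t, ⟪toLp 2 (prodVec χ), toLp 2 (actVec O φ t)⟫_ℂ‖ ^ 2
      = ‖∑ t, overlap A t * overlap Aᶜ t‖ ^ 2 := by simp only [hsplit]
    _ ≤ (∑ t, ‖overlap A t‖ ^ 2) * ∑ t, ‖overlap Aᶜ t‖ ^ 2 := norm_sum_mul_sq_le _ _ _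
    _ ≤ _ := mul_le_mul (hbessel A) (hbessel Aᶜ) (by positivity) (by positivity)

theorem card_globalStab_div_le_LMax_Psi_sq (hO : IsLocalRep O)
    (hφ : ∀ k, ∑ x, ‖φ k x‖ ^ 2 = 1) (horth : OrthCond O φ) :
    Nat.card (globalStab O φ) / (Fintype.card G : ℝ) ^ n ≤ LMax (Psi O φ) ^ 2 := by
  have hp : (Nat.card (globalStab O φ) : ℝ) ≠ 0 := by exact_mod_cast (card_globalStab_pos hO).ne'
  have h := pow_le_pow_left₀ (norm_nonneg _) (le_LMax (Psi O φ) φ hφ) 2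
  rw [norm_inner_toLp_Psi_sq, sum_inner_prodVec_actVec hO (fun k => norm_toLp_eq_one (hφ k)) horth,
    Complex.norm_natCast] at h
  refine Eq.trans_le ?_ h
  rw [sq, mul_div_mul_right _ _ hp]

theorem LMax_Psi_sq_le (hO : IsLocalRep O) (hφ : ∀ k, ∑ x, ‖φ k x‖ ^ 2 = 1)
    (horth : OrthCond O φ) (A : Finset (Fin m)) :
    LMax (Psi O φ) ^ 2 ≤ Nat.card (localStab O φ A) * Nat.card (localStab O φ Aᶜ) /
      ((Fintype.card G : ℝ) ^ n * Nat.card (globalStab O φ)) := by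
  have hLMax : LMax (Psi O φ) ≤ √(Nat.card (localStab O φ A) * Nat.card (localStab O φ Aᶜ) /
      ((Fintype.card G : ℝ) ^ n * Nat.card (globalStab O φ))) := by
    refine LMax_le (Real.sqrt_nonneg _) fun χ hχ => Real.le_sqrt_of_sq_le ?_
    rw [norm_inner_toLp_Psi_sq]
    gcongr
    exact norm_sum_inner_prodVec_actVec_sq_le hO (fun k => norm_toLp_eq_one (hφ k)) horth A
      fun k => norm_toLp_eq_one (hχ k)
  have h0 : 0 ≤ LMax (Psi O φ) := (norm_nonneg _).trans (le_LMax (Psi O φ) φ hφ)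
  calc LMax (Psi O φ) ^ 2 ≤ _ := pow_le_pow_left₀ h0 hLMax 2
    _ = _ := Real.sq_sqrt (by positivity)

end Symmetrisation

theorem general_bound_general
    {G : Type} [Group G] [Fintype G] {n m : ℕ}
    {ι : Fin m → Type} [∀ k, Fintype (ι k)] [∀ k, DecidableEq (ι k)]
    (O : (k : Fin m) → (Fin n → G) → Matrix (ι k) (ι k) ℂ) (hO : IsLocalRep O)
    (φ : (k : Fin m) → ι k → ℂ) (hφ : ∀ k, ∑ x : ι k, ‖φ k x‖ ^ 2 = 1)
    (horth : OrthCond O φ)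
    (A : Finset (Fin m)) :
    - Real.logb 2 (((Nat.card (localStab O φ A) : ℝ) *
          (Nat.card (localStab O φ Aᶜ) : ℝ)) / (Nat.card (globalStab O φ) : ℝ)) ≤
        EG (Psi O φ) - (n : ℝ) * Real.logb 2 (Fintype.card G) ∧
      EG (Psi O φ) - (n : ℝ) * Real.logb 2 (Fintype.card G) ≤
        - Real.logb 2 (Nat.card (globalStab O φ) : ℝ) := by
  have hp : (0 : ℝ) < Nat.card (globalStab O φ) := by exact_mod_cast card_globalStab_pos hO
  have hN : (0 : ℝ) < (Fintype.card G : ℝ) ^ n := by positivity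
  have hlow := card_globalStab_div_le_LMax_Psi_sq hO hφ horth
  have hup := LMax_Psi_sq_le hO hφ horth A
  have hΛ : 0 < LMax (Psi O φ) ^ 2 := (div_pos hp hN).trans_le hlow
  have hEG : EG (Psi O φ) - n * Real.logb 2 (Fintype.card G) =
      -Real.logb 2 ((Fintype.card G : ℝ) ^ n * LMax (Psi O φ) ^ 2) := by
    rw [EG, Real.logb_mul hN.ne' hΛ.ne', Real.logb_pow 2 (Fintype.card G : ℝ) n]
    ring
  rw [hEG]
  constructor
  · refine neg_le_neg (Real.logb_le_logb_of_le one_lt_two (by positivity) ?_)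
    refine (mul_le_mul_of_nonneg_left hup hN.le).trans_eq ?_
    field_simp
  · refine neg_le_neg (Real.logb_le_logb_of_le one_lt_two hp ?_)
    rwa [div_le_iff₀' hN] at hlow

/-- General bound theorem: if the parties split into two nonempty sets
A and B = Aᶜ with 𝒢_Φ(B) ⊆ 𝒢_Φ(A), then
−log₂(|𝒢_Φ(A)|·|𝒢_Φ(B)|/|𝒢_Φ|) ≤ E_G(Ψ) − n·log₂|G| ≤ −log₂|𝒢_Φ|. -/
theorem general_bound
    {G : Type} [Group G] [Fintype G] {n m : ℕ}
    {ι : Fin m → Type} [∀ k, Fintype (ι k)] [∀ k, DecidableEq (ι k)]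
    (O : (k : Fin m) → (Fin n → G) → Matrix (ι k) (ι k) ℂ) (hO : IsLocalRep O)
    (φ : (k : Fin m) → ι k → ℂ) (hφ : ∀ k, ∑ x : ι k, ‖φ k x‖ ^ 2 = 1)
    (horth : OrthCond O φ)
    (A : Finset (Fin m)) (hA : A.Nonempty) (hB : Aᶜ.Nonempty)
    (hsub : localStab O φ Aᶜ ⊆ localStab O φ A) :
    - Real.logb 2 (((Nat.card (localStab O φ A) : ℝ) *
          (Nat.card (localStab O φ Aᶜ) : ℝ)) / (Nat.card (globalStab O φ) : ℝ)) ≤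
        EG (Psi O φ) - (n : ℝ) * Real.logb 2 (Fintype.card G) ∧
      EG (Psi O φ) - (n : ℝ) * Real.logb 2 (Fintype.card G) ≤
        - Real.logb 2 (Nat.card (globalStab O φ) : ℝ) :=
  general_bound_general O hO φ hφ horth A

end GenForm
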